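/- Consider a finite MDP with finite nonempty state set S, finite nonempty action set A, transition probabilities p : S × A × S → ℝ with p(s'|s,a) ≥ 0 and Σ_{s'} p(s'|s,a) = 1, reward r : S × A → ℝ, discount γ ∈ [0,1), and behavior policy μ : S × A → ℝ with μ(a|s) ≥ 0 and Σ_a μ(a|s) = 1. Let 0 < τ₁ < τ₂ < 1 and let V_{τ₁}, V_{τ₂} be τ₁- and τ₂-expectile value functions, with associated Q-functions Q_{τᵢ}(s,a) = r(s,a) + γ·Σ_{s'} p(s'|s,a)·V_{τᵢ}(s'). Then Q_{τ₁}(s,a) ≤ Q_{τ₂}(s,a) for every state s and action a. -/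

import Mathlib

open Finset

/-- `m` is the `τ`-expectile of the values `f` under the weights `w`. -/
def IsExpectile {A : Type*} [Fintype A] (τ : ℝ) (w f : A → ℝ) (m : ℝ) : Prop :=
  τ * ∑ a, w a * max (f a - m) 0 = (1 - τ) * ∑ a, w a * max (m - f a) 0

/-- `V` is a `τ`-expectile value function for the finite MDP `(p, r, γ)` and behavior
policy `μ`. -/
def IsExpectileValueFn {S A : Type*} [Fintype S] [Fintype A]
    (p : S → A → S → ℝ) (r : S → A → ℝ) (γ : ℝ) (μ : S → A → ℝ)
    (τ : ℝ) (V : S → ℝ) : Prop :=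
  ∀ s, IsExpectile τ (μ s) (fun a => r s a + γ * ∑ s', p s a s' * V s') (V s)

/-
The expectile is monotone in the level `τ` and in the values, and commutes with adding a
constant, while `V ↦ Q_V` satisfies `Q_{V₁} ≤ Q_{V₂} + γc` whenever `V₁ ≤ V₂ + c`. If `D > 0` were
the largest value of `V₁ - V₂`, these would give `V₁ ≤ V₂ + γD`, hence `D ≤ γD < D`. So `V₁ ≤ V₂`,
and then `Q_{V₁} ≤ Q_{V₂}`.
-/

/-- The summand of value `y` in the first-order condition `IsExpectile` for the candidate `m`. -/
def expectileScore (τ y m : ℝ) : ℝ :=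
  τ * max (y - m) 0 - (1 - τ) * max (m - y) 0

lemma expectileScore_strictAnti {τ : ℝ} (h0 : 0 < τ) (h1 : τ < 1) (y : ℝ) :
    StrictAnti (expectileScore τ y) := by
  intro m m' hm
  simp only [expectileScore, max_def]
  split_ifs <;> nlinarith

lemma expectileScore_monotone {τ : ℝ} (h0 : 0 ≤ τ) (h1 : τ ≤ 1) (m : ℝ) :
    Monotone fun y => expectileScore τ y m := by
  intro y y' hy
  simp only [expectileScore, max_def]
  split_ifs <;> nlinarith

lemma expectileScore_le_of_le {τ τ' : ℝ} (h : τ ≤ τ') (y m : ℝ) :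
    expectileScore τ y m ≤ expectileScore τ' y m := by
  simp only [expectileScore, max_def]
  split_ifs <;> nlinarith

lemma isExpectile_iff_sum_expectileScore {A : Type*} [Fintype A] (τ : ℝ) (w f : A → ℝ)
    (m : ℝ) : IsExpectile τ w f m ↔ ∑ a, w a * expectileScore τ (f a) m = 0 := by
  simp only [IsExpectile, expectileScore, mul_sub, sum_sub_distrib, mul_left_comm (w _),
    ← mul_sum, sub_eq_zero]

lemma IsExpectile.add_const {A : Type*} [Fintype A] {τ : ℝ} {w f : A → ℝ} {m : ℝ}
    (h : IsExpectile τ w f m) (c : ℝ) : IsExpectile τ w (fun a => f a + c) (m + c) := by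
  simpa only [IsExpectile, add_sub_add_right_eq_sub] using h

lemma IsExpectile.le_of_le {A : Type*} [Fintype A] {w f g : A → ℝ} {τ₁ τ₂ m₁ m₂ : ℝ}
    (hw : ∀ a, 0 ≤ w a) (hw_pos : 0 < ∑ a, w a)
    (h12 : τ₁ ≤ τ₂) (h0 : 0 < τ₂) (h1 : τ₂ < 1) (hfg : ∀ a, f a ≤ g a)
    (h₁ : IsExpectile τ₁ w f m₁) (h₂ : IsExpectile τ₂ w g m₂) : m₁ ≤ m₂ := by
  rw [isExpectile_iff_sum_expectileScore] at h₁ h₂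
  by_contra! hlt
  obtain ⟨b, -, hb⟩ := exists_lt_of_sum_lt (f := fun _ => 0) (g := w) (by simpa using hw_pos)
  have hscore : ∀ a, expectileScore τ₁ (f a) m₁ ≤ expectileScore τ₂ (g a) m₁ := fun a =>
    (expectileScore_le_of_le h12 _ _).trans (expectileScore_monotone h0.le h1.le _ (hfg a))
  have hstrict : ∑ a, w a * expectileScore τ₂ (g a) m₁ < ∑ a, w a * expectileScore τ₂ (g a) m₂ :=
    sum_lt_sum (fun a _ => mul_le_mul_of_nonneg_left
        ((expectileScore_strictAnti h0 h1 _).antitone hlt.le) (hw a))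
      ⟨b, mem_univ b, mul_lt_mul_of_pos_left (expectileScore_strictAnti h0 h1 _ hlt) hb⟩
  have hmono : ∑ a, w a * expectileScore τ₁ (f a) m₁ ≤ ∑ a, w a * expectileScore τ₂ (g a) m₁ :=
    sum_le_sum fun a _ => mul_le_mul_of_nonneg_left (hscore a) (hw a)
  linarith

def qValue {S A : Type*} [Fintype S] (p : S → A → S → ℝ) (r : S → A → ℝ) (γ : ℝ)
    (V : S → ℝ) (s : S) (a : A) : ℝ :=
  r s a + γ * ∑ s', p s a s' * V s'

lemma qValue_le_add_of_le_add {S A : Type*} [Fintype S] {p : S → A → S → ℝ}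
    (hp : ∀ s a s', 0 ≤ p s a s') (hps : ∀ s a, ∑ s', p s a s' = 1) (r : S → A → ℝ)
    {γ : ℝ} (hγ : 0 ≤ γ) {V₁ V₂ : S → ℝ} {c : ℝ} (hV : ∀ s, V₁ s ≤ V₂ s + c) (s : S) (a : A) :
    qValue p r γ V₁ s a ≤ qValue p r γ V₂ s a + γ * c := by
  have : ∑ s', p s a s' * V₁ s' ≤ ∑ s', p s a s' * V₂ s' + c :=
    calc ∑ s', p s a s' * V₁ s' ≤ ∑ s', p s a s' * (V₂ s' + c) :=
          sum_le_sum fun s' _ => mul_le_mul_of_nonneg_left (hV s') (hp s a s')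
      _ = ∑ s', p s a s' * V₂ s' + c := by
          simp only [mul_add, sum_add_distrib, ← sum_mul, hps s a, one_mul]
  unfold qValue
  linarith [mul_le_mul_of_nonneg_left this hγ]

lemma IsExpectileValueFn.le_of_le {S A : Type*} [Fintype S] [Fintype A]
    {p : S → A → S → ℝ} (hp : ∀ s a s', 0 ≤ p s a s') (hps : ∀ s a, ∑ s', p s a s' = 1)
    {r : S → A → ℝ} {γ : ℝ} (hγ : γ ∈ Set.Ico (0 : ℝ) 1)
    {μ : S → A → ℝ} (hμ : ∀ s a, 0 ≤ μ s a) (hμ_pos : ∀ s, 0 < ∑ a, μ s a)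
    {τ₁ τ₂ : ℝ} (h12 : τ₁ ≤ τ₂) (h0 : 0 < τ₂) (h1 : τ₂ < 1) {V₁ V₂ : S → ℝ}
    (hV₁ : IsExpectileValueFn p r γ μ τ₁ V₁) (hV₂ : IsExpectileValueFn p r γ μ τ₂ V₂)
    (s : S) : V₁ s ≤ V₂ s := by
  have : Nonempty S := ⟨s⟩
  obtain ⟨s₀, hs₀⟩ := Finite.exists_max fun s => V₁ s - V₂ s
  set D := V₁ s₀ - V₂ s₀
  have hV : ∀ s, V₁ s ≤ V₂ s + max D 0 := fun s => by linarith [hs₀ s, le_max_left D 0]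
  have hD : D ≤ γ * max D 0 := by
    have := (hV₁ s₀).le_of_le (hμ s₀) (hμ_pos s₀) h12 h0 h1
      (qValue_le_add_of_le_add hp hps r hγ.1 hV s₀) ((hV₂ s₀).add_const (γ * max D 0))
    linarith
  have hD0 : D ≤ 0 := by
    by_contra! hpos
    rw [max_eq_left hpos.le] at hD
    linarith [mul_lt_mul_of_pos_right hγ.2 hpos]
  linarith [hs₀ s]

theorem expectile_q_function_mono_in_tau_general
    {S A : Type*} [Fintype S] [Fintype A]
    (p : S → A → S → ℝ) (hp : ∀ s a s', 0 ≤ p s a s')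
    (hps : ∀ s a, ∑ s', p s a s' = 1)
    (r : S → A → ℝ) (γ : ℝ) (hγ : γ ∈ Set.Ico (0 : ℝ) 1)
    (μ : S → A → ℝ) (hμ : ∀ s a, 0 ≤ μ s a) (hμs : ∀ s, ∑ a, μ s a = 1)
    (τ₁ τ₂ : ℝ) (h0 : 0 < τ₁) (h12 : τ₁ < τ₂) (h1 : τ₂ < 1)
    (V₁ V₂ : S → ℝ)
    (hV₁ : IsExpectileValueFn p r γ μ τ₁ V₁)
    (hV₂ : IsExpectileValueFn p r γ μ τ₂ V₂) :
    ∀ s a, r s a + γ * ∑ s', p s a s' * V₁ s'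
      ≤ r s a + γ * ∑ s', p s a s' * V₂ s' := by
  have hV : ∀ s, V₁ s ≤ V₂ s + 0 := fun s => by
    rw [add_zero]
    exact hV₁.le_of_le hp hps hγ hμ (fun s => by simp [hμs s]) h12.le (h0.trans h12) h1 hV₂ s
  intro s a
  simpa only [qValue, mul_zero, add_zero] using qValue_le_add_of_le_add hp hps r hγ.1 hV s a

/-- For `0 < τ₁ < τ₂ < 1` and expectile value functions `V₁, V₂`, the
associated Q-functions `Qᵢ(s,a) = r(s,a) + γ·Σ_{s'} p(s'|s,a)·Vᵢ(s')` satisfy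
`Q₁(s,a) ≤ Q₂(s,a)` for every state `s` and action `a`. -/
theorem expectile_q_function_mono_in_tau
    {S A : Type*} [Fintype S] [Nonempty S] [Fintype A] [Nonempty A]
    (p : S → A → S → ℝ) (hp : ∀ s a s', 0 ≤ p s a s')
    (hps : ∀ s a, ∑ s', p s a s' = 1)
    (r : S → A → ℝ) (γ : ℝ) (hγ : γ ∈ Set.Ico (0 : ℝ) 1)
    (μ : S → A → ℝ) (hμ : ∀ s a, 0 ≤ μ s a) (hμs : ∀ s, ∑ a, μ s a = 1)
    (τ₁ τ₂ : ℝ) (h0 : 0 < τ₁) (h12 : τ₁ < τ₂) (h1 : τ₂ < 1)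
    (V₁ V₂ : S → ℝ)
    (hV₁ : IsExpectileValueFn p r γ μ τ₁ V₁)
    (hV₂ : IsExpectileValueFn p r γ μ τ₂ V₂) :
    ∀ s a, r s a + γ * ∑ s', p s a s' * V₁ s'
      ≤ r s a + γ * ∑ s', p s a s' * V₂ s' :=
  expectile_q_function_mono_in_tau_general p hp hps r γ hγ μ hμ hμs τ₁ τ₂ h0 h12 h1 V₁ V₂ hV₁ hV₂
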